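/- Let g(z) ∈ ℂ[t][z] be a polynomial in z whose coefficients are polynomials in t, monic in z of degree s ≥ 2 with zero coefficient of z^(s-1), and let D ≥ 1 be the maximum t-degree of the coefficients of g. Then for all but finitely many c ∈ ℂ, the t-degree of the e-fold iterate g^e evaluated at c equals D·s^(e-1). -/

import Mathlib

/-!
Write `g = z^s + r` with `r = g.eraseLead`. Since the `z^(s-1)`-coefficient vanishes, `r` has
`z`-degree at most `s - 2`, so if `q` has `t`-degree `N` with `D < 2N` then `r(q)` has `t`-degree
at most `D + (s - 2) N < s N` and `g(q)` has `t`-degree exactly `s N`. This applies to every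
iterate once `g(c)` has `t`-degree `D`, which fails only when `c` is a root of the nonzero
polynomial in `z` formed by the `t^D`-coefficients of `g`, i.e. `(swap g).coeff D`.
-/

open Polynomial Polynomial.Bivariate

/-- `polyIter p n` is the `n`-fold composition `p ∘ p ∘ ⋯ ∘ p`. -/
noncomputable def polyIter {R : Type*} [CommSemiring R] (p : Polynomial R) : ℕ → Polynomial R
  | 0 => X
  | n + 1 => p.comp (polyIter p n)

theorem polyIter_succ_eval {R : Type*} [CommSemiring R] (p : R[X]) (n : ℕ) (x : R) :
    (polyIter p (n + 1)).eval x = p.eval ((polyIter p n).eval x) :=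
  eval_comp

theorem polyIter_one {R : Type*} [CommSemiring R] (p : R[X]) : polyIter p 1 = p :=
  comp_X

namespace Polynomial

section Swap

variable {R : Type*} [CommSemiring R]

theorem coeff_coeff_swap (g : R[X][X]) (i k : ℕ) :
    ((swap g).coeff k).coeff i = (g.coeff i).coeff k := by
  induction g using Polynomial.induction_on' with
  | add p q hp hq => simp [hp, hq]
  | monomial n a =>
    induction a using Polynomial.induction_on' with
    | add p q hp hq => simp_all [map_add]
    | monomial m r =>
      rw [swap_monomial_monomial]
      simp only [coeff_monomial]
      split_ifs <;> simp_all [coeff_monomial]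

theorem coeff_eval_C_eq_eval_coeff_swap (g : R[X][X]) (c : R) (k : ℕ) :
    (g.eval (C c)).coeff k = ((swap g).coeff k).eval c := by
  induction g using Polynomial.induction_on' with
  | add p q hp hq => simp [hp, hq]
  | monomial n a =>
    induction a using Polynomial.induction_on' with
    | add p q hp hq => simp_all [map_add]
    | monomial m r =>
      rw [swap_monomial_monomial, eval_monomial, ← C_pow, coeff_mul_C, coeff_monomial,
        coeff_monomial]
      split_ifs <;> simp

theorem coeff_swap_natDegree_coeff_ne_zero {g : R[X][X]} {i : ℕ} (hi : g.coeff i ≠ 0) :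
    (swap g).coeff (g.coeff i).natDegree ≠ 0 := fun h => by
  have hlead : (g.coeff i).leadingCoeff = 0 := by
    rw [leadingCoeff, ← coeff_coeff_swap, h, coeff_zero]
  exact hi (leadingCoeff_eq_zero.mp hlead)

end Swap

section Degree

variable {R : Type*} [CommSemiring R] {D : ℕ}

theorem natDegree_eval_le_of_natDegree_coeff_le {g : R[X][X]}
    (hD : ∀ i, (g.coeff i).natDegree ≤ D) (q : R[X]) :
    (g.eval q).natDegree ≤ D + g.natDegree * q.natDegree := by
  rw [eval_eq_sum_range]
  refine natDegree_sum_le_of_forall_le _ _ fun i hi => ?_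
  calc (g.coeff i * q ^ i).natDegree ≤ (g.coeff i).natDegree + i * q.natDegree :=
        natDegree_mul_le.trans (add_le_add le_rfl natDegree_pow_le)
    _ ≤ D + g.natDegree * q.natDegree := by
        gcongr
        · exact hD i
        · exact Nat.lt_succ_iff.mp (Finset.mem_range.mp hi)

theorem natDegree_eval_C_eq_of_eval_coeff_swap_ne_zero {g : R[X][X]}
    (hD : ∀ i, (g.coeff i).natDegree ≤ D) {c : R} (hc : ((swap g).coeff D).eval c ≠ 0) :
    (g.eval (C c)).natDegree = D := by
  refine le_antisymm ?_ (le_natDegree_of_ne_zero ?_)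
  · simpa using natDegree_eval_le_of_natDegree_coeff_le hD (C c)
  · rwa [coeff_eval_C_eq_eval_coeff_swap]

theorem natDegree_eval_eq_of_monic_of_nextCoeff_eq_zero [NoZeroDivisors R] {g : R[X][X]}
    (hg : g.Monic) (hnext : g.nextCoeff = 0) (hs : 2 ≤ g.natDegree)
    (hD : ∀ i, (g.coeff i).natDegree ≤ D) {q : R[X]} (hq : D < 2 * q.natDegree) :
    (g.eval q).natDegree = g.natDegree * q.natDegree := by
  have hr : ∀ i, (g.eraseLead.coeff i).natDegree ≤ D := fun i => by
    rw [eraseLead_coeff]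
    split_ifs
    · simp
    · exact hD i
  have hlt : (g.eraseLead.eval q).natDegree < (q ^ g.natDegree).natDegree := by
    rw [natDegree_pow]
    calc (g.eraseLead.eval q).natDegree ≤ D + g.eraseLead.natDegree * q.natDegree :=
          natDegree_eval_le_of_natDegree_coeff_le hr q
      _ ≤ D + (g.natDegree - 2) * q.natDegree := by
          gcongr
          exact natDegree_eraseLead_le_of_nextCoeff_eq_zero hnext
      _ < g.natDegree * q.natDegree := by
          obtain ⟨k, hk⟩ : ∃ k, g.natDegree = k + 2 := ⟨g.natDegree - 2, by omega⟩
          rw [hk, Nat.add_sub_cancel, add_mul]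
          omega
  have hsplit : g.eval q = g.eraseLead.eval q + q ^ g.natDegree := by
    conv_lhs => rw [← g.eraseLead_add_C_mul_X_pow]
    rw [hg.leadingCoeff, C_1, one_mul, eval_add, eval_pow, eval_X]
  rw [hsplit, natDegree_add_eq_right_of_natDegree_lt hlt, natDegree_pow]

theorem natDegree_eval_C_polyIter_succ [NoZeroDivisors R] {g : R[X][X]} (hg : g.Monic)
    (hnext : g.nextCoeff = 0) (hs : 2 ≤ g.natDegree) (hD₁ : 1 ≤ D)
    (hD : ∀ i, (g.coeff i).natDegree ≤ D) {c : R} (hc : ((swap g).coeff D).eval c ≠ 0) (n : ℕ) :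
    ((polyIter g (n + 1)).eval (C c)).natDegree = D * g.natDegree ^ n := by
  induction n with
  | zero => simpa [polyIter_one] using natDegree_eval_C_eq_of_eval_coeff_swap_ne_zero hD hc
  | succ n ih =>
    have hpow : 1 ≤ g.natDegree ^ n := Nat.one_le_pow _ _ (by omega)
    rw [polyIter_succ_eval, natDegree_eval_eq_of_monic_of_nextCoeff_eq_zero hg hnext hs hD
      (by rw [ih]; nlinarith), ih]
    ring

end Degree

end Polynomial

theorem stmt4 (s D : ℕ) (hs : 2 ≤ s) (hD : 1 ≤ D)
    (g : Polynomial (Polynomial ℂ)) (hg : g.Monic) (hgdeg : g.natDegree = s)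
    (hgnf : g.coeff (s - 1) = 0)
    (hDmax : ∀ i, (g.coeff i).natDegree ≤ D) (hDattained : ∃ i, (g.coeff i).natDegree = D)
    (e : ℕ) (he : 1 ≤ e) :
    {c : ℂ | ((polyIter g e).eval (C c)).natDegree ≠ D * s ^ (e - 1)}.Finite := by
  obtain ⟨n, rfl⟩ : ∃ n, e = n + 1 := ⟨e - 1, by omega⟩
  have hnext : g.nextCoeff = 0 := by rwa [nextCoeff_of_natDegree_pos (by omega), hgdeg]
  have hswap : (swap g).coeff D ≠ 0 := by
    obtain ⟨i, hi⟩ := hDattained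
    have hgi : g.coeff i ≠ 0 := fun h => by simp [h] at hi; omega
    exact hi ▸ coeff_swap_natDegree_coeff_ne_zero hgi
  refine (finite_setOfPred_isRoot hswap).subset fun c hc => ?_
  by_contra hroot
  exact hc (by simpa [hgdeg] using
    natDegree_eval_C_polyIter_succ hg hnext (hgdeg ▸ hs) hD hDmax hroot n)
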